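/- For discrete random variables U, Y, Z with finite support, let f, g be bounded functions with E[f(U)|Y=y]=0 and E[g(Z)|Y=y]=0 for all y with P(Y=y)>0. Then E_y[ |E[f(U)g(Z) | Y=y]| ] ≤ ||f||_∞ ||g||_∞ √(2 I(U;Z|Y)), where the outer expectation is over Y. -/

import Mathlib

open scoped BigOperators

noncomputable section

/-- Probability of an event under a weight function `μ` on a finite sample space. -/
def pr {Ω : Type*} [Fintype Ω] (μ : Ω → ℝ) (A : Set Ω) : ℝ :=
  ∑ ω, A.indicator μ ω

/-- `μ` is a probability mass function on the finite sample space. -/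
def IsPMF {Ω : Type*} [Fintype Ω] (μ : Ω → ℝ) : Prop :=
  (∀ ω, 0 ≤ μ ω) ∧ (∑ ω, μ ω) = 1

/-- Mutual information `I(U;Z)` (in nats) of finitely-valued random variables. -/
def MI {Ω α β : Type*} [Fintype Ω] [Fintype α] [Fintype β]
    (μ : Ω → ℝ) (U : Ω → α) (Z : Ω → β) : ℝ :=
  ∑ a : α, ∑ b : β,
    pr μ {ω | U ω = a ∧ Z ω = b} *
      Real.log (pr μ {ω | U ω = a ∧ Z ω = b} /
        (pr μ {ω | U ω = a} * pr μ {ω | Z ω = b}))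

/-- Conditional mutual information `I(U;Z∣Y)` (in nats). -/
def condMI {Ω α β γ : Type*} [Fintype Ω] [Fintype α] [Fintype β] [Fintype γ]
    (μ : Ω → ℝ) (U : Ω → α) (Z : Ω → β) (Y : Ω → γ) : ℝ :=
  ∑ y : γ, ∑ a : α, ∑ b : β,
    pr μ {ω | U ω = a ∧ Z ω = b ∧ Y ω = y} *
      Real.log ((pr μ {ω | Y ω = y} * pr μ {ω | U ω = a ∧ Z ω = b ∧ Y ω = y}) /
        (pr μ {ω | U ω = a ∧ Y ω = y} * pr μ {ω | Z ω = b ∧ Y ω = y}))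

/-- Shannon entropy `H(Y)` (in nats). -/
def ent {Ω γ : Type*} [Fintype Ω] [Fintype γ] (μ : Ω → ℝ) (Y : Ω → γ) : ℝ :=
  -∑ y : γ, pr μ {ω | Y ω = y} * Real.log (pr μ {ω | Y ω = y})

/-- Conditional entropy `H(Z∣Y)` (in nats). -/
def condEnt {Ω β γ : Type*} [Fintype Ω] [Fintype β] [Fintype γ]
    (μ : Ω → ℝ) (Z : Ω → β) (Y : Ω → γ) : ℝ :=
  ∑ y : γ, ∑ b : β,
    pr μ {ω | Z ω = b ∧ Y ω = y} *
      Real.log (pr μ {ω | Y ω = y} / pr μ {ω | Z ω = b ∧ Y ω = y})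

/-- Conditional independence `X ⊥ Z ∣ Y` (cross-multiplied form, valid also when
`P(Y = y) = 0`). -/
def CondIndep {Ω α β γ : Type*} [Fintype Ω]
    (μ : Ω → ℝ) (X : Ω → α) (Z : Ω → β) (Y : Ω → γ) : Prop :=
  ∀ (x : α) (z : β) (y : γ),
    pr μ {ω | Y ω = y} * pr μ {ω | X ω = x ∧ Z ω = z ∧ Y ω = y} =
      pr μ {ω | X ω = x ∧ Y ω = y} * pr μ {ω | Z ω = z ∧ Y ω = y}

end


/-!
On the fibre `Y = y`, write `P_y` for the joint mass of `(U, Z)` and `Q_y` for the product of its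
marginals, rescaled to the mass `P(Y = y)`. As `f` has conditional mean zero, `Q_y` integrates
`f ⊗ g` to zero, so the fibre covariance is at most `‖f‖ ‖g‖ ‖P_y - Q_y‖₁`, and Pinsker's
inequality bounds this by `‖f‖ ‖g‖ √(P(Y = y)) √(2 P(Y = y) I(U;Z|Y=y))`. Cauchy–Schwarz over `y`
turns the sum of these bounds into `‖f‖ ‖g‖ √(2 I(U;Z|Y))`. Pinsker's inequality itself follows by
Cauchy–Schwarz from the scalar bound `3 (t - 1)² ≤ 2 (t + 2) (t log t - t + 1)`.
-/

open Real Set Finset InformationTheory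

lemma monotoneOn_add_one_mul_log_sub :
    MonotoneOn (fun t => (t + 1) * log t - 2 * (t - 1)) (Ioi 0) := by
  have hderiv : ∀ t : ℝ, 0 < t →
      HasDerivAt (fun t => (t + 1) * log t - 2 * (t - 1)) (log t + t⁻¹ - 1) t :=
    fun t ht => ((((hasDerivAt_id' t).add_const 1).mul (hasDerivAt_log ht.ne')).sub
      (((hasDerivAt_id' t).sub_const 1).const_mul 2)).congr_deriv (by field_simp; ring)
  refine monotoneOn_of_hasDerivWithinAt_nonneg (convex_Ioi 0)
    (fun t ht => (hderiv t ht).continuousAt.continuousWithinAt)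
    (fun t ht => (hderiv t (interior_subset ht)).hasDerivWithinAt) (fun t ht => ?_)
  rw [interior_Ioi] at ht
  linarith [one_sub_inv_le_log_of_pos ht]

/-- The derivative of `2 (t + 2) klFun t - 3 (t - 1)²` is `4 ((t + 1) log t - 2 (t - 1))`, which
has the sign of `t - 1`. -/
lemma three_mul_sq_sub_one_le_klFun {t : ℝ} (ht : 0 ≤ t) :
    3 * (t - 1) ^ 2 ≤ 2 * (t + 2) * klFun t := by
  set G : ℝ → ℝ := fun t => (t + 1) * log t - 2 * (t - 1)
  set h : ℝ → ℝ := fun t => 2 * (t + 2) * klFun t - 3 * (t - 1) ^ 2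
  have hcont : Continuous h := by fun_prop [continuous_klFun]
  have hderiv : ∀ s : ℝ, 0 < s → HasDerivWithinAt h (4 * G s) (Ioi 0) s := fun s hs =>
    ((((((hasDerivAt_id' s).add_const 2).const_mul 2).mul (hasDerivAt_klFun hs.ne')).sub
      ((((hasDerivAt_id' s).sub_const 1).pow 2).const_mul 3)).congr_deriv
        (by simp [G, klFun]; ring)).hasDerivWithinAt
  have hG : MonotoneOn G (Ioi 0) := monotoneOn_add_one_mul_log_sub
  have hG1 : G 1 = 0 := by simp [G]
  have h1 : h 1 = 0 := by simp [h, klFun_one]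
  suffices 0 ≤ h t by simp only [h] at this; linarith
  rcases le_total 1 t with h1t | ht1
  · have hmono : MonotoneOn h (Ici 1) :=
      monotoneOn_of_hasDerivWithinAt_nonneg (convex_Ici 1) hcont.continuousOn
        (fun s hs => by
          rw [interior_Ici] at hs ⊢
          exact (hderiv s (one_pos.trans hs)).mono (Ioi_subset_Ioi zero_le_one))
        (fun s hs => by
          rw [interior_Ici] at hs
          linarith [hG (mem_Ioi.2 one_pos) (mem_Ioi.2 (one_pos.trans hs)) hs.le])
    simpa [h1] using hmono self_mem_Ici h1t h1t
  · have hanti : AntitoneOn h (Icc 0 1) :=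
      antitoneOn_of_hasDerivWithinAt_nonpos (convex_Icc 0 1) hcont.continuousOn
        (fun s hs => by
          rw [interior_Icc] at hs ⊢
          exact (hderiv s hs.1).mono Ioo_subset_Ioi_self)
        (fun s hs => by
          rw [interior_Icc] at hs
          linarith [hG hs.1 (mem_Ioi.2 one_pos) hs.2.le])
    simpa [h1] using hanti ⟨ht, ht1⟩ ⟨zero_le_one, le_rfl⟩ ht1

lemma three_mul_sq_sub_div_le {p q : ℝ} (hp : 0 ≤ p) (hq : 0 ≤ q) (hpq : q = 0 → p = 0) :
    3 * (p - q) ^ 2 / (p + 2 * q) ≤ 2 * (p * log (p / q) - p + q) := by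
  rcases hq.eq_or_lt with rfl | hq
  · simp [hpq rfl]
  obtain ⟨t, ht, rfl⟩ : ∃ t, 0 ≤ t ∧ p = q * t := ⟨p / q, by positivity, by field_simp⟩
  rw [div_le_iff₀ (by positivity), mul_div_cancel_left₀ t hq.ne']
  calc 3 * (q * t - q) ^ 2 = q * (q * (3 * (t - 1) ^ 2)) := by ring
    _ ≤ q * (q * (2 * (t + 2) * klFun t)) :=
        mul_le_mul_of_nonneg_left
          (mul_le_mul_of_nonneg_left (three_mul_sq_sub_one_le_klFun ht) hq.le) hq.le
    _ = 2 * (q * t * log t - q * t + q) * (q * t + 2 * q) := by rw [klFun]; ring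

section Pinsker

variable {ι : Type*} [Fintype ι] {p q : ι → ℝ}

lemma sum_three_mul_sq_sub_div_le (hp : ∀ i, 0 ≤ p i) (hq : ∀ i, 0 ≤ q i)
    (hpq : ∀ i, q i = 0 → p i = 0) (hsum : ∑ i, p i = ∑ i, q i) :
    ∑ i, 3 * (p i - q i) ^ 2 / (p i + 2 * q i) ≤ 2 * ∑ i, p i * log (p i / q i) :=
  calc ∑ i, 3 * (p i - q i) ^ 2 / (p i + 2 * q i)
      ≤ ∑ i, 2 * (p i * log (p i / q i) - p i + q i) :=
        sum_le_sum fun i _ => three_mul_sq_sub_div_le (hp i) (hq i) (hpq i)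
    _ = 2 * ∑ i, p i * log (p i / q i) := by
        simp only [← mul_sum, sum_add_distrib, sum_sub_distrib, hsum]
        ring

lemma sum_mul_log_div_nonneg (hp : ∀ i, 0 ≤ p i) (hq : ∀ i, 0 ≤ q i)
    (hpq : ∀ i, q i = 0 → p i = 0) (hsum : ∑ i, p i = ∑ i, q i) :
    0 ≤ ∑ i, p i * log (p i / q i) := by
  have hchi : 0 ≤ ∑ i, 3 * (p i - q i) ^ 2 / (p i + 2 * q i) :=
    sum_nonneg fun i _ => div_nonneg (by positivity) (by linarith [hp i, hq i])
  linarith [sum_three_mul_sq_sub_div_le hp hq hpq hsum]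

/-- Pinsker's inequality. Cauchy–Schwarz with weights `(p + 2q) / 3` reduces it to
`sum_three_mul_sq_sub_div_le`. -/
theorem sq_sum_abs_sub_le (hp : ∀ i, 0 ≤ p i) (hq : ∀ i, 0 ≤ q i)
    (hpq : ∀ i, q i = 0 → p i = 0) (hsum : ∑ i, p i = ∑ i, q i) :
    (∑ i, |p i - q i|) ^ 2 ≤ (∑ i, q i) * (2 * ∑ i, p i * log (p i / q i)) := by
  set A : ι → ℝ := fun i => (p i + 2 * q i) / 3
  set B : ι → ℝ := fun i => 3 * (p i - q i) ^ 2 / (p i + 2 * q i)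
  have hA : ∀ i, 0 ≤ A i := fun i => by have := hp i; have := hq i; positivity
  have hB : ∀ i, 0 ≤ B i := fun i => by have := hp i; have := hq i; positivity
  have habs : ∀ i, |p i - q i| = √(A i) * √(B i) := by
    intro i
    rw [← sqrt_mul (hA i), ← sqrt_sq_eq_abs]
    congr 1
    rcases eq_or_ne (p i + 2 * q i) 0 with h | h
    · obtain ⟨hpi, hqi⟩ : p i = 0 ∧ q i = 0 := by constructor <;> linarith [hp i, hq i]
      simp [A, B, hpi, hqi]
    · simp only [A, B]
      generalize p i + 2 * q i = s at h ⊢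
      field_simp
  have hsumA : ∑ i, A i = ∑ i, q i := by
    simp only [A, ← sum_div, sum_add_distrib, ← mul_sum, hsum]
    ring
  calc (∑ i, |p i - q i|) ^ 2 = (∑ i, √(A i) * √(B i)) ^ 2 := by simp only [habs]
    _ ≤ (√(∑ i, A i) * √(∑ i, B i)) ^ 2 := by
        gcongr
        exact sum_sqrt_mul_sqrt_le _ hA hB
    _ = (∑ i, A i) * ∑ i, B i := by
        rw [mul_pow, sq_sqrt (sum_nonneg fun i _ => hA i), sq_sqrt (sum_nonneg fun i _ => hB i)]
    _ ≤ (∑ i, q i) * (2 * ∑ i, p i * log (p i / q i)) := by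
        rw [hsumA]
        exact mul_le_mul_of_nonneg_left (sum_three_mul_sq_sub_div_le hp hq hpq hsum)
          (sum_nonneg fun i _ => hq i)

end Pinsker

noncomputable section JointMass

variable {α β : Type*} [Fintype α] [Fintype β] {P : α → β → ℝ}

def marginalProd (P : α → β → ℝ) (i : α × β) : ℝ :=
  (∑ b, P i.1 b) * (∑ a, P a i.2) / ∑ a, ∑ b, P a b

/-- `jointMI P = m · I(P / m)` for the total mass `m` of `P`; for `P = condJoint μ U Z Y y` it is
the `y`-summand of `condMI μ U Z Y`. -/
def jointMI (P : α → β → ℝ) : ℝ :=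
  ∑ a, ∑ b, P a b * log ((∑ a', ∑ b', P a' b') * P a b / ((∑ b', P a b') * ∑ a', P a' b))

lemma marginalProd_nonneg (hP : ∀ a b, 0 ≤ P a b) (i : α × β) : 0 ≤ marginalProd P i :=
  div_nonneg (mul_nonneg (sum_nonneg fun b _ => hP _ b) (sum_nonneg fun a _ => hP a _))
    (sum_nonneg fun a _ => sum_nonneg fun b _ => hP a b)

lemma sum_marginalProd : ∑ i, marginalProd P i = ∑ a, ∑ b, P a b := by
  simp only [marginalProd, Fintype.sum_prod_type, ← sum_div, ← mul_sum, ← sum_mul]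
  rw [sum_comm (γ := β)]
  exact mul_self_div_self _

lemma sum_marginalProd_mul (f : α → ℝ) (g : β → ℝ) :
    ∑ i, marginalProd P i * (f i.1 * g i.2) =
      (∑ a, (∑ b, P a b) * f a) * (∑ b, (∑ a, P a b) * g b) / ∑ a, ∑ b, P a b := by
  rw [Fintype.sum_prod_type, sum_mul_sum, sum_div]
  refine sum_congr rfl fun a _ => ?_
  rw [sum_div]
  refine sum_congr rfl fun b _ => ?_
  simp only [marginalProd]
  ring

lemma eq_zero_of_marginalProd_eq_zero (hP : ∀ a b, 0 ≤ P a b) {i : α × β}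
    (h : marginalProd P i = 0) : P i.1 i.2 = 0 := by
  have hrow : P i.1 i.2 ≤ ∑ b, P i.1 b := single_le_sum (fun b _ => hP i.1 b) (mem_univ i.2)
  have hcol : P i.1 i.2 ≤ ∑ a, P a i.2 := single_le_sum (fun a _ => hP a i.2) (mem_univ i.1)
  have htot : P i.1 i.2 ≤ ∑ a, ∑ b, P a b :=
    hrow.trans (single_le_sum (f := fun a => ∑ b, P a b)
      (fun a _ => sum_nonneg fun b _ => hP a b) (mem_univ i.1))
  simp only [marginalProd, div_eq_zero_iff, mul_eq_zero] at h
  rcases h with (h | h) | h <;> linarith [hP i.1 i.2]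

lemma jointMI_eq_sum_mul_log_div :
    jointMI P = ∑ i, P i.1 i.2 * log (P i.1 i.2 / marginalProd P i) := by
  simp only [jointMI, marginalProd, Fintype.sum_prod_type, div_div_eq_mul_div, mul_comm]

lemma jointMI_nonneg (hP : ∀ a b, 0 ≤ P a b) : 0 ≤ jointMI P := by
  rw [jointMI_eq_sum_mul_log_div]
  exact sum_mul_log_div_nonneg (fun i => hP i.1 i.2) (marginalProd_nonneg hP)
    (fun i => eq_zero_of_marginalProd_eq_zero hP)
    (by rw [sum_marginalProd, Fintype.sum_prod_type])

lemma sum_abs_sub_marginalProd_le (hP : ∀ a b, 0 ≤ P a b) :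
    ∑ i, |P i.1 i.2 - marginalProd P i| ≤ √(∑ a, ∑ b, P a b) * √(2 * jointMI P) := by
  have hpinsker := sq_sum_abs_sub_le (fun i => hP i.1 i.2) (marginalProd_nonneg hP)
    (fun i => eq_zero_of_marginalProd_eq_zero hP)
    (by rw [sum_marginalProd, Fintype.sum_prod_type])
  rw [sum_marginalProd, ← jointMI_eq_sum_mul_log_div] at hpinsker
  rw [← sqrt_mul (sum_nonneg fun a _ => sum_nonneg fun b _ => hP a b)]
  exact le_sqrt_of_sq_le hpinsker

/-- As `f` has mean zero, `marginalProd P` integrates `f ⊗ g` to zero. -/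
lemma abs_sum_mul_mul_le_sum_abs_sub (hP : ∀ a b, 0 ≤ P a b) {f : α → ℝ} {g : β → ℝ}
    {Mf Mg : ℝ} (hf : ∀ a, ∑ b, P a b ≠ 0 → |f a| ≤ Mf) (hg : ∀ b, ∑ a, P a b ≠ 0 → |g b| ≤ Mg)
    (hfm : ∑ a, (∑ b, P a b) * f a = 0) :
    |∑ a, ∑ b, P a b * (f a * g b)| ≤ Mf * Mg * ∑ i, |P i.1 i.2 - marginalProd P i| := by
  have hcentred : ∑ a, ∑ b, P a b * (f a * g b) =
      ∑ i, (P i.1 i.2 - marginalProd P i) * (f i.1 * g i.2) := by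
    have hindep : ∑ i, marginalProd P i * (f i.1 * g i.2) = 0 := by
      rw [sum_marginalProd_mul, hfm, zero_mul, zero_div]
    simp_rw [sub_mul]
    rw [sum_sub_distrib, hindep, sub_zero, Fintype.sum_prod_type]
  have hterm : ∀ i : α × β, |(P i.1 i.2 - marginalProd P i) * (f i.1 * g i.2)| ≤
      Mf * Mg * |P i.1 i.2 - marginalProd P i| := by
    rintro ⟨a, b⟩
    by_cases hmarg : (∑ b, P a b) * ∑ a, P a b = 0
    · have hq : marginalProd P (a, b) = 0 := by
        simp only [marginalProd]
        rw [hmarg, zero_div]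
      have hp : P a b = 0 := eq_zero_of_marginalProd_eq_zero hP hq
      simp [hp, hq]
    obtain ⟨hrow, hcol⟩ := mul_ne_zero_iff.1 hmarg
    rw [abs_mul, abs_mul, mul_comm]
    exact mul_le_mul_of_nonneg_right (mul_le_mul (hf a hrow) (hg b hcol) (abs_nonneg _)
      ((abs_nonneg _).trans (hf a hrow))) (abs_nonneg _)
  calc |∑ a, ∑ b, P a b * (f a * g b)|
      ≤ ∑ i, |(P i.1 i.2 - marginalProd P i) * (f i.1 * g i.2)| :=
        hcentred ▸ abs_sum_le_sum_abs _ _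
    _ ≤ ∑ i, Mf * Mg * |P i.1 i.2 - marginalProd P i| := sum_le_sum fun i _ => hterm i
    _ = Mf * Mg * ∑ i, |P i.1 i.2 - marginalProd P i| := (mul_sum _ _ _).symm

end JointMass

section Pr

variable {Ω δ : Type*} [Fintype Ω] [Fintype δ] {μ : Ω → ℝ}

lemma pr_nonneg (hμ : ∀ ω, 0 ≤ μ ω) (A : Set Ω) : 0 ≤ pr μ A :=
  sum_nonneg fun ω _ => indicator_nonneg (fun ω _ => hμ ω) ω

lemma nonempty_of_pr_ne_zero {A : Set Ω} (h : pr μ A ≠ 0) : A.Nonempty := by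
  contrapose! h
  simp [pr, h]

lemma sum_indicator_mul_eq_zero_of_pr_eq_zero (hμ : ∀ ω, 0 ≤ μ ω) {A : Set Ω}
    (h : pr μ A = 0) (φ : Ω → ℝ) : ∑ ω, A.indicator (fun ω => μ ω * φ ω) ω = 0 := by
  have hzero := (sum_eq_zero_iff_of_nonneg fun ω _ => indicator_nonneg (fun ω _ => hμ ω) ω).1 h
  refine sum_eq_zero fun ω hω => ?_
  rw [indicator_mul_left, hzero ω hω, zero_mul]

lemma sum_pr_and_mul (V : Ω → δ) (E : Ω → Prop) (φ : δ → ℝ) :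
    ∑ d, pr μ {ω | V ω = d ∧ E ω} * φ d =
      ∑ ω, {ω | E ω}.indicator (fun ω => μ ω * φ (V ω)) ω := by
  classical
  simp only [pr, sum_mul]
  rw [sum_comm]
  refine sum_congr rfl fun ω _ => ?_
  by_cases hE : E ω <;> simp [indicator_apply, hE]

lemma sum_pr_and (V : Ω → δ) (E : Ω → Prop) :
    ∑ d, pr μ {ω | V ω = d ∧ E ω} = pr μ {ω | E ω} := by
  simpa [pr] using sum_pr_and_mul (μ := μ) V E 1

end Pr

noncomputable section CondJoint

variable {Ω α β γ : Type*} [Fintype Ω] (μ : Ω → ℝ) (U : Ω → α) (Z : Ω → β) (Y : Ω → γ) (y : γ)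

def condJoint (a : α) (b : β) : ℝ := pr μ {ω | U ω = a ∧ Z ω = b ∧ Y ω = y}

lemma sum_condJoint_right [Fintype β] (a : α) :
    ∑ b, condJoint μ U Z Y y a b = pr μ {ω | U ω = a ∧ Y ω = y} := by
  have hswap : ∀ b, condJoint μ U Z Y y a b = pr μ {ω | Z ω = b ∧ U ω = a ∧ Y ω = y} :=
    fun b => by simp only [condJoint, and_left_comm]
  simp_rw [hswap]
  exact sum_pr_and Z _

lemma sum_condJoint_left [Fintype α] (b : β) :
    ∑ a, condJoint μ U Z Y y a b = pr μ {ω | Z ω = b ∧ Y ω = y} :=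
  sum_pr_and U _

lemma sum_sum_condJoint [Fintype α] [Fintype β] :
    ∑ a, ∑ b, condJoint μ U Z Y y a b = pr μ {ω | Y ω = y} := by
  simp_rw [sum_condJoint_right]
  exact sum_pr_and U _

lemma sum_sum_condJoint_mul [Fintype α] [Fintype β] (f : α → ℝ) (g : β → ℝ) :
    ∑ a, ∑ b, condJoint μ U Z Y y a b * (f a * g b) =
      ∑ ω, {ω | Y ω = y}.indicator (fun ω => μ ω * (f (U ω) * g (Z ω))) ω := by
  rw [← sum_pr_and_mul (fun ω => (U ω, Z ω)) (fun ω => Y ω = y) (fun i => f i.1 * g i.2),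
    Fintype.sum_prod_type]
  simp only [condJoint, Prod.mk.injEq, and_assoc]

lemma condMI_eq_sum_jointMI [Fintype α] [Fintype β] [Fintype γ] :
    condMI μ U Z Y = ∑ y, jointMI (condJoint μ U Z Y y) := by
  simp only [jointMI, sum_condJoint_right, sum_condJoint_left, sum_pr_and]
  rfl

end CondJoint

theorem abs_sum_indicator_mul_le {Ω α β γ : Type*} [Fintype Ω] [Fintype α] [Fintype β]
    {μ : Ω → ℝ} (hμ : ∀ ω, 0 ≤ μ ω) {U : Ω → α} {Z : Ω → β} {Y : Ω → γ} {y : γ}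
    {f : α → ℝ} {g : β → ℝ} {Mf Mg : ℝ} (hMf : 0 ≤ Mf) (hMg : 0 ≤ Mg)
    (hf : ∀ ω, |f (U ω)| ≤ Mf) (hg : ∀ ω, |g (Z ω)| ≤ Mg)
    (hfm : ∑ ω, {ω | Y ω = y}.indicator (fun ω => μ ω * f (U ω)) ω = 0) :
    |∑ ω, {ω | Y ω = y}.indicator (fun ω => μ ω * (f (U ω) * g (Z ω))) ω| ≤
      Mf * Mg * (√(pr μ {ω | Y ω = y}) * √(2 * jointMI (condJoint μ U Z Y y))) := by
  have hP : ∀ a b, 0 ≤ condJoint μ U Z Y y a b := fun a b => pr_nonneg hμ _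
  have hf' : ∀ a, ∑ b, condJoint μ U Z Y y a b ≠ 0 → |f a| ≤ Mf := by
    intro a ha
    rw [sum_condJoint_right] at ha
    obtain ⟨ω, rfl, -⟩ := nonempty_of_pr_ne_zero ha
    exact hf ω
  have hg' : ∀ b, ∑ a, condJoint μ U Z Y y a b ≠ 0 → |g b| ≤ Mg := by
    intro b hb
    rw [sum_condJoint_left] at hb
    obtain ⟨ω, rfl, -⟩ := nonempty_of_pr_ne_zero hb
    exact hg ω
  have hfm' : ∑ a, (∑ b, condJoint μ U Z Y y a b) * f a = 0 := by
    simp_rw [sum_condJoint_right]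
    rwa [sum_pr_and_mul]
  rw [← sum_sum_condJoint_mul μ U Z Y y f g, ← sum_sum_condJoint μ U Z Y y]
  exact (abs_sum_mul_mul_le_sum_abs_sub hP hf' hg' hfm').trans
    (mul_le_mul_of_nonneg_left (sum_abs_sub_marginalProd_le hP) (mul_nonneg hMf hMg))

theorem avg_abs_cond_cov_le_sqrt_two_condMI_general
    {Ω α β γ : Type*} [Fintype Ω] [Fintype α] [Fintype β] [Fintype γ]
    (μ : Ω → ℝ) (hμ : IsPMF μ) (U : Ω → α) (Z : Ω → β) (Y : Ω → γ)
    (f : α → ℝ) (g : β → ℝ) (Mf Mg : ℝ)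
    (hf : ∀ ω, |f (U ω)| ≤ Mf) (hg : ∀ ω, |g (Z ω)| ≤ Mg)
    (hfm : ∀ y : γ, 0 < pr μ {ω | Y ω = y} →
      (∑ ω, ({ω | Y ω = y}).indicator (fun ω => μ ω * f (U ω)) ω) = 0) :
    (∑ y : γ, |∑ ω, ({ω | Y ω = y}).indicator (fun ω => μ ω * (f (U ω) * g (Z ω))) ω|)
      ≤ Mf * Mg * Real.sqrt (2 * condMI μ U Z Y) := by
  obtain ⟨hμ0, hμ1⟩ := hμ
  obtain ⟨ω₀, -, -⟩ := exists_ne_zero_of_sum_ne_zero (hμ1 ▸ one_ne_zero : ∑ ω, μ ω ≠ 0)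
  have hMf : 0 ≤ Mf := (abs_nonneg _).trans (hf ω₀)
  have hMg : 0 ≤ Mg := (abs_nonneg _).trans (hg ω₀)
  have hfm' : ∀ y, ∑ ω, {ω | Y ω = y}.indicator (fun ω => μ ω * f (U ω)) ω = 0 := fun y =>
    (pr_nonneg hμ0 _).lt_or_eq.elim (hfm y)
      fun h => sum_indicator_mul_eq_zero_of_pr_eq_zero hμ0 h.symm _
  have hY : ∑ y, pr μ {ω | Y ω = y} = 1 := by
    simpa [pr, hμ1] using sum_pr_and (μ := μ) Y fun _ => True
  calc ∑ y, |∑ ω, {ω | Y ω = y}.indicator (fun ω => μ ω * (f (U ω) * g (Z ω))) ω|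
      ≤ ∑ y, Mf * Mg * (√(pr μ {ω | Y ω = y}) * √(2 * jointMI (condJoint μ U Z Y y))) :=
        sum_le_sum fun y _ => abs_sum_indicator_mul_le hμ0 hMf hMg hf hg (hfm' y)
    _ ≤ Mf * Mg * (√(∑ y, pr μ {ω | Y ω = y}) * √(∑ y, 2 * jointMI (condJoint μ U Z Y y))) := by
        rw [← mul_sum]
        exact mul_le_mul_of_nonneg_left (sum_sqrt_mul_sqrt_le _ (fun y => pr_nonneg hμ0 _)
          fun y => mul_nonneg zero_le_two (jointMI_nonneg fun a b => pr_nonneg hμ0 _))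
          (mul_nonneg hMf hMg)
    _ = Mf * Mg * √(2 * condMI μ U Z Y) := by
        rw [hY, sqrt_one, one_mul, ← mul_sum, condMI_eq_sum_jointMI]

/-- conditional mutual information controls the average conditional
covariance of bounded, conditionally zero-mean functionals:
`E_y |E[f(U) g(Z) ∣ Y=y]| ≤ ‖f‖_∞ ‖g‖_∞ √(2 I(U;Z∣Y))`.
(The summand `∑_ω 1{Y ω = y} μ ω f(U ω) g(Z ω)` equals `P(Y=y)·E[f(U)g(Z)∣Y=y]`.) -/
theorem avg_abs_cond_cov_le_sqrt_two_condMI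
    {Ω α β γ : Type*} [Fintype Ω] [Fintype α] [Fintype β] [Fintype γ]
    (μ : Ω → ℝ) (hμ : IsPMF μ) (U : Ω → α) (Z : Ω → β) (Y : Ω → γ)
    (f : α → ℝ) (g : β → ℝ) (Mf Mg : ℝ)
    (hf : ∀ ω, |f (U ω)| ≤ Mf) (hg : ∀ ω, |g (Z ω)| ≤ Mg)
    (hfm : ∀ y : γ, 0 < pr μ {ω | Y ω = y} →
      (∑ ω, ({ω | Y ω = y}).indicator (fun ω => μ ω * f (U ω)) ω) = 0)
    (hgm : ∀ y : γ, 0 < pr μ {ω | Y ω = y} →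
      (∑ ω, ({ω | Y ω = y}).indicator (fun ω => μ ω * g (Z ω)) ω) = 0) :
    (∑ y : γ, |∑ ω, ({ω | Y ω = y}).indicator (fun ω => μ ω * (f (U ω) * g (Z ω))) ω|)
      ≤ Mf * Mg * Real.sqrt (2 * condMI μ U Z Y) :=
  avg_abs_cond_cov_le_sqrt_two_condMI_general μ hμ U Z Y f g Mf Mg hf hg hfm
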